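/- arXiv:1512.05469 — 2 statements merged into one kernel-verified Lean document; each statement's English description precedes it below -/
import Mathlib

section
/- Let m ≥ 2 and let a, b, ã, b̃ ∈ ℝ^m be vectors, each with pairwise distinct entries, such that a and ã agree at every index except possibly a single index k, and likewise b and b̃ agree at every index except possibly the same index k. Then |ρ(a,b) − ρ(ã,b̃)| ≤ 6(m−1)(5m−3)/(m(m²−1)). -/
open Finset

/-- Rank of entry `i` in vector `a`: the number of indices `j` with `a j ≤ a i`. -/
noncomputable def rankOf {m : ℕ} (a : Fin m → ℝ) (i : Fin m) : ℕ :=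
  (Finset.univ.filter fun j => a j ≤ a i).card

/-- Spearman's ρ dependence score. -/
noncomputable def spearmanRho {m : ℕ} (a b : Fin m → ℝ) : ℝ :=
  |1 - 6 * (∑ i, ((rankOf a i : ℝ) - (rankOf b i : ℝ)) ^ 2) / (m * ((m : ℝ) ^ 2 - 1))|

lemma rankOf_pos {m : ℕ} (a : Fin m → ℝ) (i : Fin m) : 1 ≤ rankOf a i := by
  rw [rankOf]
  exact Finset.card_pos.mpr ⟨i, by simp⟩

lemma rankOf_le {m : ℕ} (a : Fin m → ℝ) (i : Fin m) : rankOf a i ≤ m := by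
  rw [rankOf]
  exact (Finset.card_filter_le _ _).trans (by simp)

lemma rank_change {m : ℕ} {k : Fin m} {a ta : Fin m → ℝ}
    (hak : ∀ i, i ≠ k → a i = ta i) (i : Fin m) (hi : i ≠ k) :
    rankOf a i ≤ rankOf ta i + 1 := by
  have hset : (Finset.univ.filter fun j => a j ≤ a i).erase k
      = (Finset.univ.filter fun j => ta j ≤ ta i).erase k := by
    ext j
    simp only [mem_erase, mem_filter, mem_univ, true_and, and_congr_right_iff]
    intro hj
    rw [hak j hj, hak i hi]
  have step : ∀ (s : Finset (Fin m)), s.card ≤ (s.erase k).card + 1 := by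
    intro s
    by_cases hk : k ∈ s
    · have h1 : (s.erase k).card = s.card - 1 := Finset.card_erase_of_mem hk
      have h2 : 1 ≤ s.card := Finset.card_pos.mpr ⟨k, hk⟩
      omega
    · rw [Finset.erase_eq_of_notMem hk]
      omega
  calc rankOf a i ≤ ((Finset.univ.filter fun j => a j ≤ a i).erase k).card + 1 := step _
    _ = ((Finset.univ.filter fun j => ta j ≤ ta i).erase k).card + 1 := by rw [hset]
    _ ≤ rankOf ta i + 1 := by
        exact Nat.add_le_add_right (Finset.card_le_card (Finset.erase_subset _ _)) 1

theorem spearman_global_sensitivity_exact {m : ℕ} (hm : 2 ≤ m) (k : Fin m)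
    (a b ta tb : Fin m → ℝ)
    (ha : Function.Injective a) (hb : Function.Injective b)
    (hta : Function.Injective ta) (htb : Function.Injective tb)
    (hak : ∀ i, i ≠ k → a i = ta i) (hbk : ∀ i, i ≠ k → b i = tb i) :
    |spearmanRho a b - spearmanRho ta tb| ≤ 6 * ((m : ℝ) - 1) * (5 * (m : ℝ) - 3) / (m * ((m : ℝ) ^ 2 - 1)) := by
  have hm2 : (2 : ℝ) ≤ (m : ℝ) := by exact_mod_cast hm
  set D : ℝ := (m : ℝ) * ((m : ℝ) ^ 2 - 1) with hD
  have hDpos : 0 < D := by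
    have : (3 : ℝ) ≤ (m : ℝ) ^ 2 - 1 := by nlinarith
    positivity
  set d : Fin m → ℝ := fun i => (rankOf a i : ℝ) - (rankOf b i : ℝ) with hd
  set e : Fin m → ℝ := fun i => (rankOf ta i : ℝ) - (rankOf tb i : ℝ) with he
  set S : ℝ := ∑ i, d i ^ 2 with hS
  set T : ℝ := ∑ i, e i ^ 2 with hT
  -- bounds on |d i| and |e i|
  have habs : ∀ (u v : Fin m → ℝ) (i : Fin m),
      |(rankOf u i : ℝ) - (rankOf v i : ℝ)| ≤ (m : ℝ) - 1 := by
    intro u v i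
    have h1 : (1 : ℝ) ≤ (rankOf u i : ℝ) := by exact_mod_cast rankOf_pos u i
    have h2 : (rankOf u i : ℝ) ≤ (m : ℝ) := by exact_mod_cast rankOf_le u i
    have h3 : (1 : ℝ) ≤ (rankOf v i : ℝ) := by exact_mod_cast rankOf_pos v i
    have h4 : (rankOf v i : ℝ) ≤ (m : ℝ) := by exact_mod_cast rankOf_le v i
    rw [abs_le]; constructor <;> linarith
  have hrank1 : ∀ (u tu : Fin m → ℝ), (∀ i, i ≠ k → u i = tu i) → ∀ i, i ≠ k →
      |(rankOf u i : ℝ) - (rankOf tu i : ℝ)| ≤ 1 := by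
    intro u tu huk i hi
    have h1 : rankOf u i ≤ rankOf tu i + 1 := rank_change huk i hi
    have h2 : rankOf tu i ≤ rankOf u i + 1 :=
      rank_change (fun j hj => (huk j hj).symm) i hi
    have h1' : (rankOf u i : ℝ) ≤ (rankOf tu i : ℝ) + 1 := by exact_mod_cast h1
    have h2' : (rankOf tu i : ℝ) ≤ (rankOf u i : ℝ) + 1 := by exact_mod_cast h2
    rw [abs_le]; constructor <;> linarith
  -- key bound on |S - T|
  have key : |S - T| ≤ ((m : ℝ) - 1) * (5 * (m : ℝ) - 3) := by
    have hsum : S - T = ∑ i, (d i ^ 2 - e i ^ 2) := by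
      rw [hS, hT, Finset.sum_sub_distrib]
    rw [hsum]
    have h1 : |∑ i, (d i ^ 2 - e i ^ 2)| ≤ ∑ i, |d i ^ 2 - e i ^ 2| :=
      Finset.abs_sum_le_sum_abs _ _
    have hsplit : ∑ i, |d i ^ 2 - e i ^ 2|
        = (∑ i ∈ Finset.univ.erase k, |d i ^ 2 - e i ^ 2|) + |d k ^ 2 - e k ^ 2| :=
      (Finset.sum_erase_add _ _ (Finset.mem_univ k)).symm
    have hne : ∀ i ∈ Finset.univ.erase k, |d i ^ 2 - e i ^ 2| ≤ 4 * ((m : ℝ) - 1) := by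
      intro i hi
      have hik : i ≠ k := (Finset.mem_erase.mp hi).1
      have hde : |d i - e i| ≤ 2 := by
        have h1 := hrank1 a ta hak i hik
        have h2 := hrank1 b tb hbk i hik
        have : d i - e i = ((rankOf a i : ℝ) - (rankOf ta i : ℝ))
            - ((rankOf b i : ℝ) - (rankOf tb i : ℝ)) := by
          simp only [hd, he]; ring
        rw [this]
        calc |((rankOf a i : ℝ) - (rankOf ta i : ℝ)) - ((rankOf b i : ℝ) - (rankOf tb i : ℝ))|
            ≤ |(rankOf a i : ℝ) - (rankOf ta i : ℝ)| + |(rankOf b i : ℝ) - (rankOf tb i : ℝ)| :=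
              abs_sub _ _
          _ ≤ 2 := by linarith
      have hdpe : |d i + e i| ≤ 2 * ((m : ℝ) - 1) := by
        have h1 := habs a b i
        have h2 := habs ta tb i
        calc |d i + e i| ≤ |d i| + |e i| := abs_add_le _ _
          _ ≤ 2 * ((m : ℝ) - 1) := by simp only [hd, he] at *; linarith
      have : d i ^ 2 - e i ^ 2 = (d i - e i) * (d i + e i) := by ring
      rw [this, abs_mul]
      calc |d i - e i| * |d i + e i| ≤ 2 * (2 * ((m : ℝ) - 1)) :=
            mul_le_mul hde hdpe (abs_nonneg _) (by norm_num)
        _ = 4 * ((m : ℝ) - 1) := by ring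
    have hk : |d k ^ 2 - e k ^ 2| ≤ ((m : ℝ) - 1) ^ 2 := by
      have h1 := habs a b k
      have h2 := habs ta tb k
      have hd2 : d k ^ 2 ≤ ((m : ℝ) - 1) ^ 2 := by
        rw [← sq_abs]
        exact pow_le_pow_left₀ (abs_nonneg _) h1 2
      have he2 : e k ^ 2 ≤ ((m : ℝ) - 1) ^ 2 := by
        rw [← sq_abs]
        exact pow_le_pow_left₀ (abs_nonneg _) h2 2
      rw [abs_sub_le_iff]
      constructor <;> nlinarith [sq_nonneg (d k), sq_nonneg (e k)]
    have hcard : ((Finset.univ.erase k).card : ℝ) = (m : ℝ) - 1 := by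
      rw [Finset.card_erase_of_mem (Finset.mem_univ k), Finset.card_univ, Fintype.card_fin]
      have : 1 ≤ m := by omega
      push_cast [Nat.cast_sub this]
      ring
    have hsumne : ∑ i ∈ Finset.univ.erase k, |d i ^ 2 - e i ^ 2|
        ≤ ((m : ℝ) - 1) * (4 * ((m : ℝ) - 1)) := by
      calc ∑ i ∈ Finset.univ.erase k, |d i ^ 2 - e i ^ 2|
          ≤ ∑ _i ∈ Finset.univ.erase k, 4 * ((m : ℝ) - 1) := Finset.sum_le_sum hne
        _ = ((Finset.univ.erase k).card : ℝ) * (4 * ((m : ℝ) - 1)) := by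
            rw [Finset.sum_const, nsmul_eq_mul]
        _ = ((m : ℝ) - 1) * (4 * ((m : ℝ) - 1)) := by rw [hcard]
    calc |∑ i, (d i ^ 2 - e i ^ 2)| ≤ ∑ i, |d i ^ 2 - e i ^ 2| := h1
      _ = (∑ i ∈ Finset.univ.erase k, |d i ^ 2 - e i ^ 2|) + |d k ^ 2 - e k ^ 2| := hsplit
      _ ≤ ((m : ℝ) - 1) * (4 * ((m : ℝ) - 1)) + ((m : ℝ) - 1) ^ 2 := by
          exact add_le_add hsumne hk
      _ ≤ ((m : ℝ) - 1) * (5 * (m : ℝ) - 3) := by nlinarith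
  -- conclude
  have hrho1 : spearmanRho a b = |1 - 6 * S / D| := rfl
  have hrho2 : spearmanRho ta tb = |1 - 6 * T / D| := rfl
  rw [hrho1, hrho2]
  calc |‖(1 : ℝ) - 6 * S / D‖ - ‖(1 : ℝ) - 6 * T / D‖|
      ≤ |(1 - 6 * S / D) - (1 - 6 * T / D)| := abs_abs_sub_abs_le_abs_sub _ _
    _ = 6 * |S - T| / D := by
        have h : (1 - 6 * S / D) - (1 - 6 * T / D) = 6 * (T - S) / D := by ring
        rw [h, abs_div, abs_of_pos hDpos, abs_mul, abs_sub_comm]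
        norm_num
    _ ≤ 6 * (((m : ℝ) - 1) * (5 * (m : ℝ) - 3)) / D := by
        gcongr
    _ = 6 * ((m : ℝ) - 1) * (5 * (m : ℝ) - 3) / (m * ((m : ℝ) ^ 2 - 1)) := by
        rw [hD]; ring
end

section
/- Let m ≥ 2, let x′ ∈ ℝ^m, let k: ℝ×ℝ → [0,1] be a kernel and l: ℝ×ℝ → [0,1] be a kernel that is L-Lipschitz (|l(u,v) − l(u′,v′)| ≤ L(|u − u′| + |v − v′|)), and let r, r̃ ∈ ℝ^m be residual vectors satisfying |rᵢ − r̃ᵢ| ≤ 8/(n λ^{3/2}) for all i, where n ∈ ℕ and 0 < λ ≤ 1. Let K_{ij} = k(x′_i, x′_j), L_{ij} = l(r_i, r_j), L̃_{ij} = l(r̃_i, r̃_j), and H = I − (1/m)J. Then |trace(KHLH)/(m−1)² − trace(KHL̃H)/(m−1)²| ≤ (8/λ^{3/2}) · 32 L √m / n. -/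
open Matrix Real

/-- The `m × m` centering matrix `H = I - (1/m) J`, where `J` is the all-ones matrix. -/
noncomputable def centering (m : ℕ) : Matrix (Fin m) (Fin m) ℝ :=
  1 - (m : ℝ)⁻¹ • Matrix.of (fun _ _ => (1 : ℝ))

/-- The empirical HSIC score `trace(K H L H) / (m - 1)²`. -/
noncomputable def hsicScore {m : ℕ} (K L : Matrix (Fin m) (Fin m) ℝ) : ℝ :=
  (K * centering m * L * centering m).trace / ((m : ℝ) - 1) ^ 2

lemma mul_centering_apply {m : ℕ} (N : Matrix (Fin m) (Fin m) ℝ) (i k : Fin m) :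
    (N * centering m) i k = N i k - (m : ℝ)⁻¹ * ∑ j, N i j := by
  simp [centering, Matrix.mul_apply, Matrix.sub_apply, Matrix.one_apply, mul_sub,
    Finset.sum_sub_distrib, Finset.mul_sum, mul_ite, Finset.sum_mul, mul_comm]

lemma centering_mul_apply {m : ℕ} (N : Matrix (Fin m) (Fin m) ℝ) (i k : Fin m) :
    (centering m * N) i k = N i k - (m : ℝ)⁻¹ * ∑ j, N j k := by
  simp [centering, Matrix.mul_apply, Matrix.sub_apply, Matrix.one_apply, sub_mul,
    Finset.sum_sub_distrib, Finset.mul_sum, ite_mul]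

lemma avg_abs_le {m : ℕ} {c : ℝ} (hc : 0 ≤ c) (f : Fin m → ℝ) (hf : ∀ j, |f j| ≤ c) :
    |(m : ℝ)⁻¹ * ∑ j, f j| ≤ c := by
  rcases Nat.eq_zero_or_pos m with h | h
  · subst h; simpa using hc
  · have hm : (0:ℝ) < m := by exact_mod_cast h
    rw [abs_mul, abs_of_nonneg (by positivity : (0:ℝ) ≤ (m:ℝ)⁻¹)]
    calc (m:ℝ)⁻¹ * |∑ j, f j| ≤ (m:ℝ)⁻¹ * (m * c) := by
          apply mul_le_mul_of_nonneg_left _ (by positivity)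
          calc |∑ j, f j| ≤ ∑ j, |f j| := Finset.abs_sum_le_sum_abs _ _
            _ ≤ ∑ _j : Fin m, c := Finset.sum_le_sum fun j _ => hf j
            _ = m * c := by simp [mul_comm]
      _ = c := by field_simp

lemma abs_sub' (a b : ℝ) : |a - b| ≤ |a| + |b| := by
  rw [sub_eq_add_neg]; exact (abs_add_le _ _).trans (by rw [abs_neg])

lemma abs_mul_centering_le {m : ℕ} {c : ℝ} (hc : 0 ≤ c) {N : Matrix (Fin m) (Fin m) ℝ}
    (hN : ∀ i j, |N i j| ≤ c) (i k : Fin m) : |(N * centering m) i k| ≤ 2 * c := by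
  rw [mul_centering_apply]
  calc |N i k - (m:ℝ)⁻¹ * ∑ j, N i j| ≤ |N i k| + |(m:ℝ)⁻¹ * ∑ j, N i j| := abs_sub' _ _
    _ ≤ c + c := add_le_add (hN i k) (avg_abs_le hc _ (fun j => hN i j))
    _ = 2 * c := by ring

lemma abs_centering_mul_le {m : ℕ} {c : ℝ} (hc : 0 ≤ c) {N : Matrix (Fin m) (Fin m) ℝ}
    (hN : ∀ i j, |N i j| ≤ c) (i k : Fin m) : |(centering m * N) i k| ≤ 2 * c := by
  rw [centering_mul_apply]
  calc |N i k - (m:ℝ)⁻¹ * ∑ j, N j k| ≤ |N i k| + |(m:ℝ)⁻¹ * ∑ j, N j k| := abs_sub' _ _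
    _ ≤ c + c := add_le_add (hN i k) (avg_abs_le hc _ (fun j => hN j k))
    _ = 2 * c := by ring

/-- Training-set sensitivity of the HSIC score: if the residuals move by at most
`8/(n λ^{3/2})` per coordinate and `l` is `L`-Lipschitz, the HSIC score moves by at most
`(8/λ^{3/2}) · 32 L √m / n`. -/
theorem hsic_training_sensitivity {m : ℕ} (hm : 2 ≤ m) (n : ℕ)
    (lam : ℝ) (hlam0 : 0 < lam) (hlam1 : lam ≤ 1)
    (x : Fin m → ℝ) (kk ll : ℝ → ℝ → ℝ) (Lip : ℝ)
    (hkk : ∀ u v, kk u v ∈ Set.Icc (0 : ℝ) 1) (hll : ∀ u v, ll u v ∈ Set.Icc (0 : ℝ) 1)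
    (hlip : ∀ u v u' v', |ll u v - ll u' v'| ≤ Lip * (|u - u'| + |v - v'|))
    (r tr : Fin m → ℝ)
    (hr : ∀ i, |r i - tr i| ≤ 8 / ((n : ℝ) * lam ^ ((3 : ℝ) / 2))) :
    |hsicScore (Matrix.of fun i j => kk (x i) (x j)) (Matrix.of fun i j => ll (r i) (r j)) -
        hsicScore (Matrix.of fun i j => kk (x i) (x j))
          (Matrix.of fun i j => ll (tr i) (tr j))| ≤
      (8 / lam ^ ((3 : ℝ) / 2)) * 32 * Lip * Real.sqrt m / n := by
  set H := centering m with hH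
  set K : Matrix (Fin m) (Fin m) ℝ := Matrix.of fun i j => kk (x i) (x j) with hK
  set L1 : Matrix (Fin m) (Fin m) ℝ := Matrix.of fun i j => ll (r i) (r j) with hL1
  set L2 : Matrix (Fin m) (Fin m) ℝ := Matrix.of fun i j => ll (tr i) (tr j) with hL2
  set δ : ℝ := 8 / ((n : ℝ) * lam ^ ((3 : ℝ) / 2)) with hδ
  have hδ0 : 0 ≤ δ := by
    have : (0:ℝ) < lam ^ ((3:ℝ)/2) := Real.rpow_pos_of_pos hlam0 _
    positivity
  have hLip : 0 ≤ Lip := by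
    have h := hlip 0 0 1 0
    have h2 : |(0:ℝ) - 1| + |(0:ℝ) - 0| = 1 := by norm_num
    rw [h2] at h
    nlinarith [abs_nonneg (ll 0 0 - ll 1 0)]
  have hLδ : 0 ≤ Lip * δ := mul_nonneg hLip hδ0
  -- difference of scores
  have hdiff : hsicScore K L1 - hsicScore K L2 =
      Matrix.trace (K * H * (L1 - L2) * H) / ((m : ℝ) - 1) ^ 2 := by
    unfold hsicScore
    rw [div_sub_div_same]
    congr 1
    have : K * H * (L1 - L2) * H = K * H * L1 * H - K * H * L2 * H := by noncomm_ring
    rw [this, Matrix.trace_sub]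
  set D : Matrix (Fin m) (Fin m) ℝ := L1 - L2 with hD
  -- cyclic rearrangement
  have hcyc : Matrix.trace (K * H * D * H) = Matrix.trace ((H * (K * H)) * D) := by
    rw [Matrix.trace_mul_comm]
    congr 1
    noncomm_ring
  -- entry bounds
  have hKb : ∀ i j, |K i j| ≤ 1 := by
    intro i j
    have h := hkk (x i) (x j)
    have hKe : K i j = kk (x i) (x j) := rfl
    rw [hKe, abs_le]
    exact ⟨by linarith [h.1], h.2⟩
  have hKH : ∀ i j, |(K * H) i j| ≤ 2 * 1 := fun i j => abs_mul_centering_le one_pos.le hKb i j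
  have hM : ∀ i j, |(H * (K * H)) i j| ≤ 2 * (2 * 1) :=
    fun i j => abs_centering_mul_le (by norm_num) hKH i j
  have hDb : ∀ p q, |D p q| ≤ 2 * (Lip * δ) := by
    intro p q
    have h1 := hlip (r p) (r q) (tr p) (tr q)
    have h2 := hr p
    have h3 := hr q
    have : D p q = ll (r p) (r q) - ll (tr p) (tr q) := by
      simp [hD, hL1, hL2, Matrix.sub_apply]
    rw [this]
    calc |ll (r p) (r q) - ll (tr p) (tr q)| ≤ Lip * (|r p - tr p| + |r q - tr q|) := h1
      _ ≤ Lip * (δ + δ) := by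
          apply mul_le_mul_of_nonneg_left _ hLip
          exact add_le_add h2 h3
      _ = 2 * (Lip * δ) := by ring
  -- trace bound
  have htr : |Matrix.trace ((H * (K * H)) * D)| ≤ (m:ℝ)^2 * (4 * (2 * (Lip * δ))) := by
    rw [Matrix.trace]
    simp only [Matrix.diag, Matrix.mul_apply]
    calc |∑ l, ∑ k, (H * (K * H)) l k * D k l|
        ≤ ∑ l, |∑ k, (H * (K * H)) l k * D k l| := Finset.abs_sum_le_sum_abs _ _
      _ ≤ ∑ l : Fin m, ∑ k : Fin m, |(H * (K * H)) l k * D k l| :=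
          Finset.sum_le_sum fun l _ => Finset.abs_sum_le_sum_abs _ _
      _ ≤ ∑ _l : Fin m, ∑ _k : Fin m, 4 * (2 * (Lip * δ)) := by
          apply Finset.sum_le_sum; intro l _
          apply Finset.sum_le_sum; intro k _
          rw [abs_mul]
          exact mul_le_mul (le_trans (hM l k) (by norm_num)) (hDb k l) (abs_nonneg _)
            (by norm_num)
      _ = (m:ℝ)^2 * (4 * (2 * (Lip * δ))) := by
          simp [Finset.sum_const, Finset.card_univ]
          ring
  -- numeric facts
  have hm2 : (2:ℝ) ≤ (m:ℝ) := by exact_mod_cast hm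
  have hm1pos : (0:ℝ) < ((m:ℝ) - 1) ^ 2 := by nlinarith
  have hsqrt : 1 ≤ Real.sqrt m := by
    have : Real.sqrt 1 ≤ Real.sqrt m := Real.sqrt_le_sqrt (by linarith)
    simpa using this
  have hRHS : (8 / lam ^ ((3:ℝ)/2)) * 32 * Lip * Real.sqrt m / n
      = 32 * Lip * Real.sqrt m * δ := by rw [hδ]; ring
  rw [hdiff, hRHS, abs_div, abs_of_nonneg hm1pos.le, div_le_iff₀ hm1pos]
  calc |Matrix.trace (K * H * D * H)| = |Matrix.trace ((H * (K * H)) * D)| := by rw [hcyc]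
    _ ≤ (m:ℝ)^2 * (4 * (2 * (Lip * δ))) := htr
    _ ≤ 32 * Lip * Real.sqrt m * δ * ((m:ℝ) - 1) ^ 2 := by
        nlinarith [mul_nonneg hLδ (sq_nonneg ((m:ℝ) - 1)), sq_nonneg ((m:ℝ) - 2),
          mul_nonneg (mul_nonneg hLip hδ0) hm1pos.le,
          mul_le_mul_of_nonneg_left hsqrt (mul_nonneg (mul_nonneg hLδ hm1pos.le) (by norm_num : (0:ℝ) ≤ 32))]
end
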